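/- arXiv:math/0007016 — 2 statements merged into one kernel-verified Lean document; each statement's English description precedes it below -/
import Mathlib

section
/- For a partition λ of n and any i with 1 ≤ i < n−1, the number of standard Young tableaux of shape λ having descents at both i and i+1 is independent of i. -/
open Finset

/-- A standard Young tableau of shape `μ`: a bijective filling of the cells of `μ`
with the numbers `1, ..., μ.card`, strictly increasing along rows and columns. -/
structure SYT (μ : YoungDiagram) where
  entry : ℕ → ℕ → ℕ
  row_strict : ∀ ⦃i j1 j2 : ℕ⦄, j1 < j2 → (i, j2) ∈ μ → entry i j1 < entry i j2
  col_strict : ∀ ⦃i1 i2 j : ℕ⦄, i1 < i2 → (i2, j) ∈ μ → entry i1 j < entry i2 j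
  zeros : ∀ ⦃i j : ℕ⦄, (i, j) ∉ μ → entry i j = 0
  bijOn : Set.BijOn (fun c : ℕ × ℕ => entry c.1 c.2) (μ.cells : Set (ℕ × ℕ))
    (Set.Icc 1 μ.card)

/-- `T` has a descent at `i` iff the entry `i+1` lies in a strictly lower row than `i`. -/
def SYT.DescentAt {μ : YoungDiagram} (T : SYT μ) (i : ℕ) : Prop :=
  ∀ c d : ℕ × ℕ, c ∈ μ → d ∈ μ →
    T.entry c.1 c.2 = i → T.entry d.1 d.2 = i + 1 → c.1 < d.1


namespace SYT

variable {μ : YoungDiagram}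

theorem ext' {S T : SYT μ} (h : S.entry = T.entry) : S = T := by
  cases S; cases T; simpa using h

lemma entry_mem (T : SYT μ) {c : ℕ × ℕ} (hc : c ∈ μ) :
    T.entry c.1 c.2 ∈ Set.Icc 1 μ.card :=
  T.bijOn.mapsTo (by simpa [YoungDiagram.mem_cells] using hc)

lemma exists_cell (T : SYT μ) {v : ℕ} (h1 : 1 ≤ v) (h2 : v ≤ μ.card) :
    ∃ c : ℕ × ℕ, c ∈ μ ∧ T.entry c.1 c.2 = v := by
  obtain ⟨c, hc, hce⟩ := T.bijOn.surjOn (Set.mem_Icc.2 ⟨h1, h2⟩)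
  exact ⟨c, by simpa [YoungDiagram.mem_cells] using hc, hce⟩

lemma cell_unique (T : SYT μ) {c d : ℕ × ℕ} (hc : c ∈ μ) (hd : d ∈ μ)
    (h : T.entry c.1 c.2 = T.entry d.1 d.2) : c = d :=
  T.bijOn.injOn (by simpa [YoungDiagram.mem_cells] using hc)
    (by simpa [YoungDiagram.mem_cells] using hd) h

lemma entry_lt_entry (T : SYT μ) {x1 y1 x2 y2 : ℕ} (hm : (x2, y2) ∈ μ)
    (hx : x1 ≤ x2) (hy : y1 ≤ y2) (hne : (x1, y1) ≠ (x2, y2)) :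
    T.entry x1 y1 < T.entry x2 y2 := by
  rcases eq_or_lt_of_le hx with rfl | hx'
  · rcases eq_or_lt_of_le hy with rfl | hy'
    · exact absurd rfl hne
    · exact T.row_strict hy' hm
  · calc T.entry x1 y1 ≤ T.entry x1 y2 := by
          rcases eq_or_lt_of_le hy with rfl | hy'
          · exact le_refl _
          · exact le_of_lt (T.row_strict hy' (μ.up_left_mem (le_of_lt hx') le_rfl hm))
       _ < T.entry x2 y2 := T.col_strict hx' hm

/-- The four possible relative positions of the cells of consecutive entries. -/
lemma consec (T : SYT μ) {u w : ℕ × ℕ} {v : ℕ} (hu : u ∈ μ) (hw : w ∈ μ)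
    (heu : T.entry u.1 u.2 = v) (hew : T.entry w.1 w.2 = v + 1) :
    (w.1 = u.1 ∧ w.2 = u.2 + 1) ∨ (w.1 = u.1 + 1 ∧ w.2 = u.2) ∨
    (u.1 < w.1 ∧ w.2 < u.2) ∨ (w.1 < u.1 ∧ u.2 < w.2) := by
  obtain ⟨u1, u2⟩ := u
  obtain ⟨w1, w2⟩ := w
  simp only at *
  rcases lt_trichotomy w1 u1 with h1 | rfl | h1
  · rcases lt_trichotomy w2 u2 with h2 | rfl | h2
    · -- w strictly NW of u : entry w < entry u, contradiction
      have := T.entry_lt_entry hu (le_of_lt h1) (le_of_lt h2) (by simp; omega)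
      omega
    · have := T.entry_lt_entry hu (le_of_lt h1) le_rfl (by simp; omega)
      omega
    · right; right; right; exact ⟨h1, h2⟩
  · -- same row
    rcases lt_trichotomy w2 u2 with h2 | rfl | h2
    · have := T.entry_lt_entry hu le_rfl (le_of_lt h2) (by simp; omega)
      omega
    · omega
    · -- w right of u in same row; if gap, intermediate cell
      left
      refine ⟨rfl, ?_⟩
      by_contra hgap
      have hX : (w1, u2 + 1) ∈ μ := μ.up_left_mem le_rfl (by omega) hw
      have h3 := T.entry_lt_entry (x1 := w1) (y1 := u2) hX le_rfl (by omega) (by simp)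
      have h4 := T.entry_lt_entry (x1 := w1) (y1 := u2 + 1) hw le_rfl (by omega) (by simp; omega)
      omega
  · rcases lt_trichotomy w2 u2 with h2 | rfl | h2
    · right; right; left; exact ⟨h1, h2⟩
    · -- same column
      right; left
      refine ⟨?_, rfl⟩
      by_contra hgap
      have hX : (u1 + 1, w2) ∈ μ := μ.up_left_mem (by omega) le_rfl hw
      have h3 := T.entry_lt_entry (x1 := u1) (y1 := w2) hX (by omega) le_rfl (by simp)
      have h4 := T.entry_lt_entry (x1 := u1 + 1) (y1 := w2) hw (by omega) le_rfl (by simp; omega)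
      omega
    · -- w strictly SE of u : intermediate cell (u1, w2)
      exfalso
      have hX : (u1, w2) ∈ μ := μ.up_left_mem (by omega) le_rfl hw
      have h3 := T.entry_lt_entry (x1 := u1) (y1 := u2) hX le_rfl (by omega) (by simp; omega)
      have h4 := T.entry_lt_entry (x1 := u1) (y1 := w2) hw (by omega) le_rfl (by simp; omega)
      omega

end SYT

namespace SYT

variable {μ : YoungDiagram}

/-- The swap `k ↔ k+1` is possible: the cells of `k` and `k+1` share no row or column. -/
def Active (T : SYT μ) (k : ℕ) : Prop :=
  ∃ c d : ℕ × ℕ, c ∈ μ ∧ d ∈ μ ∧ T.entry c.1 c.2 = k ∧ T.entry d.1 d.2 = k + 1 ∧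
    c.1 ≠ d.1 ∧ c.2 ≠ d.2

private lemma swap_lt {k x y : ℕ} (hxy : x < y) (hne : ¬(x = k ∧ y = k + 1)) :
    Equiv.swap k (k + 1) x < Equiv.swap k (k + 1) y := by
  simp only [Equiv.swap_apply_def]
  split_ifs <;> omega

/-- The Bender–Knuth involution swapping entries `k` and `k+1`. -/
noncomputable def bk (T : SYT μ) (k : ℕ) : SYT μ := by
  classical
  exact if h : T.Active k then
    { entry := fun i j => Equiv.swap k (k + 1) (T.entry i j)
      row_strict := by
        intro i j1 j2 hj hm
        obtain ⟨c, d, hc, hd, hec, hed, hr, hco⟩ := h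
        have hm1 : (i, j1) ∈ μ := μ.up_left_mem le_rfl (le_of_lt hj) hm
        refine swap_lt (T.row_strict hj hm) ?_
        rintro ⟨h1, h2⟩
        have e1 : (i, j1) = c := T.cell_unique hm1 hc (by rw [h1, hec])
        have e2 : (i, j2) = d := T.cell_unique hm hd (by rw [h2, hed])
        apply hr
        rw [← e1, ← e2]
      col_strict := by
        intro i1 i2 j hi hm
        obtain ⟨c, d, hc, hd, hec, hed, hr, hco⟩ := h
        have hm1 : (i1, j) ∈ μ := μ.up_left_mem (le_of_lt hi) le_rfl hm
        refine swap_lt (T.col_strict hi hm) ?_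
        rintro ⟨h1, h2⟩
        have e1 : (i1, j) = c := T.cell_unique hm1 hc (by rw [h1, hec])
        have e2 : (i2, j) = d := T.cell_unique hm hd (by rw [h2, hed])
        apply hco
        rw [← e1, ← e2]
      zeros := by
        intro i j hm
        have hk : 1 ≤ k := by
          obtain ⟨c, d, hc, hd, hec, _⟩ := h
          have := T.entry_mem hc
          rw [hec] at this
          exact this.1
        show Equiv.swap k (k + 1) (T.entry i j) = 0
        rw [T.zeros hm, Equiv.swap_apply_of_ne_of_ne (by omega) (by omega)]
      bijOn := by
        have hk1 : 1 ≤ k := by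
          obtain ⟨c, d, hc, hd, hec, _⟩ := h
          have := T.entry_mem hc; rw [hec] at this; exact this.1
        have hk2 : k + 1 ≤ μ.card := by
          obtain ⟨c, d, hc, hd, hec, hed, _⟩ := h
          have := T.entry_mem hd; rw [hed] at this; exact this.2
        have hmaps : Set.MapsTo (Equiv.swap k (k + 1)) (Set.Icc 1 μ.card)
            (Set.Icc 1 μ.card) := by
          intro x hx
          simp only [Set.mem_Icc] at hx ⊢
          rw [Equiv.swap_apply_def]
          split_ifs <;> omega
        have hbij : Set.BijOn (Equiv.swap k (k + 1)) (Set.Icc 1 μ.card)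
            (Set.Icc 1 μ.card) := by
          refine ⟨hmaps, fun x _ y _ hxy => (Equiv.swap k (k + 1)).injective hxy, ?_⟩
          intro y hy
          refine ⟨Equiv.swap k (k + 1) y, hmaps hy, ?_⟩
          simp
        exact hbij.comp T.bijOn }
  else T

lemma bk_of_not_active {T : SYT μ} {k : ℕ} (h : ¬T.Active k) : T.bk k = T := by
  simp [bk, h]

lemma bk_entry {T : SYT μ} {k : ℕ} (h : T.Active k) (i j : ℕ) :
    (T.bk k).entry i j = Equiv.swap k (k + 1) (T.entry i j) := by
  simp [bk, h]

lemma bk_entry_eq {T : SYT μ} {k : ℕ} (h : T.Active k) {i j : ℕ}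
    (he : T.entry i j = k) : (T.bk k).entry i j = k + 1 := by
  rw [bk_entry h, he, Equiv.swap_apply_left]

lemma bk_entry_eq' {T : SYT μ} {k : ℕ} (h : T.Active k) {i j : ℕ}
    (he : T.entry i j = k + 1) : (T.bk k).entry i j = k := by
  rw [bk_entry h, he, Equiv.swap_apply_right]

lemma bk_entry_ne {T : SYT μ} {k : ℕ} (h : T.Active k) {i j : ℕ}
    (h1 : T.entry i j ≠ k) (h2 : T.entry i j ≠ k + 1) :
    (T.bk k).entry i j = T.entry i j := by
  rw [bk_entry h, Equiv.swap_apply_of_ne_of_ne h1 h2]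

lemma bk_bk (T : SYT μ) (k : ℕ) : (T.bk k).bk k = T := by
  by_cases h : T.Active k
  · have h' : (T.bk k).Active k := by
      obtain ⟨c, d, hc, hd, hec, hed, hr, hco⟩ := id h
      exact ⟨d, c, hd, hc, bk_entry_eq' h hed, bk_entry_eq h hec, hr.symm, hco.symm⟩
    apply ext'
    funext i j
    rw [bk_entry h', bk_entry h, Equiv.swap_apply_self]
  · rw [bk_of_not_active h, bk_of_not_active h]

lemma not_active_of_eq {T : SYT μ} {k : ℕ} {c d : ℕ × ℕ} (hc : c ∈ μ) (hd : d ∈ μ)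
    (hec : T.entry c.1 c.2 = k) (hed : T.entry d.1 d.2 = k + 1)
    (h : c.1 = d.1 ∨ c.2 = d.2) : ¬T.Active k := by
  rintro ⟨c', d', hc', hd', hec', hed', hr, hco⟩
  have e1 : c' = c := T.cell_unique hc' hc (by rw [hec', hec])
  have e2 : d' = d := T.cell_unique hd' hd (by rw [hed', hed])
  subst e1; subst e2
  rcases h with h | h
  · exact hr h
  · exact hco h

/-- One Bender–Knuth step, with full bookkeeping. -/
lemma step (T : SYT μ) {u w : ℕ × ℕ} {k : ℕ} (hu : u ∈ μ) (hw : w ∈ μ)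
    (heu : T.entry u.1 u.2 = k) (hew : T.entry w.1 w.2 = k + 1) :
    (T.bk k = T ∧ ((w.1 = u.1 ∧ w.2 = u.2 + 1) ∨ (w.1 = u.1 + 1 ∧ w.2 = u.2))) ∨
    ((T.bk k).entry u.1 u.2 = k + 1 ∧ (T.bk k).entry w.1 w.2 = k ∧
      (∀ x y : ℕ, T.entry x y ≠ k → T.entry x y ≠ k + 1 →
        (T.bk k).entry x y = T.entry x y) ∧
      ((u.1 < w.1 ∧ w.2 < u.2) ∨ (w.1 < u.1 ∧ u.2 < w.2))) := by
  rcases T.consec hu hw heu hew with h | h | h | h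
  · exact Or.inl ⟨bk_of_not_active (not_active_of_eq hu hw heu hew (Or.inl h.1.symm)), Or.inl h⟩
  · exact Or.inl ⟨bk_of_not_active (not_active_of_eq hu hw heu hew (Or.inr h.2.symm)), Or.inr h⟩
  · have ha : T.Active k := ⟨u, w, hu, hw, heu, hew, by omega, by omega⟩
    exact Or.inr ⟨bk_entry_eq ha heu, bk_entry_eq' ha hew,
      fun x y h1 h2 => bk_entry_ne ha h1 h2, Or.inl h⟩
  · have ha : T.Active k := ⟨u, w, hu, hw, heu, hew, by omega, by omega⟩
    exact Or.inr ⟨bk_entry_eq ha heu, bk_entry_eq' ha hew,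
      fun x y h1 h2 => bk_entry_ne ha h1 h2, Or.inr h⟩

/-- Introduce a descent from the two specific cells. -/
lemma descent_intro (T : SYT μ) {v : ℕ} {c d : ℕ × ℕ} (hc : c ∈ μ) (hd : d ∈ μ)
    (hec : T.entry c.1 c.2 = v) (hed : T.entry d.1 d.2 = v + 1) (h : c.1 < d.1) :
    T.DescentAt v := by
  intro c' d' hc' hd' hec' hed'
  have e1 : c' = c := T.cell_unique hc' hc (by rw [hec', hec])
  have e2 : d' = d := T.cell_unique hd' hd (by rw [hed', hed])
  rw [e1, e2]; exact h

end SYT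

namespace SYT

variable {μ : YoungDiagram}

/-- Forward direction: `bk j ∘ bk (j+1) ∘ bk (j+2)` maps tableaux with descents at
`j, j+1` to tableaux with descents at `j+1, j+2`. -/
lemma main_fwd (T : SYT μ) (j : ℕ) (hj : 1 ≤ j) (hj3 : j + 3 ≤ μ.card)
    (h1 : T.DescentAt j) (h2 : T.DescentAt (j + 1)) :
    (((T.bk (j + 2)).bk (j + 1)).bk j).DescentAt (j + 1) ∧
    (((T.bk (j + 2)).bk (j + 1)).bk j).DescentAt (j + 2) := by
  obtain ⟨A, hA, eA⟩ := T.exists_cell (v := j) (by omega) (by omega)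
  obtain ⟨B, hB, eB⟩ := T.exists_cell (v := j + 1) (by omega) (by omega)
  obtain ⟨C, hC, eC⟩ := T.exists_cell (v := j + 2) (by omega) (by omega)
  obtain ⟨D, hD, eD⟩ := T.exists_cell (v := j + 3) (by omega) (by omega)
  have rAB : A.1 < B.1 := h1 A B hA hB eA eB
  have rBC : B.1 < C.1 := h2 B C hB hC eB eC
  rcases T.step (k := j + 2) hC hD eC eD with ⟨hU, g1⟩ | ⟨uC, uD, unch1, g1⟩
  · -- Case I: first swap inactive
    rw [hU]
    rcases T.step (k := j + 1) hB hC eB eC with ⟨hV, g2⟩ | ⟨vB, vC, unch2, g2⟩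
    · -- I.x : second swap inactive
      rw [hV]
      have g2' : C.1 = B.1 + 1 ∧ C.2 = B.2 := by
        rcases g2 with g2 | g2
        · exact absurd g2.1 (by omega)
        · exact g2
      rcases T.step (k := j) hA hB eA eB with ⟨hW, g3⟩ | ⟨wA, wB, unch3, g3⟩
      · -- I.x.i : third swap inactive, W = T, final cells B, C, D
        rw [hW]
        have g3' : B.1 = A.1 + 1 ∧ B.2 = A.2 := by
          rcases g3 with g3 | g3
          · exact absurd g3.1 (by omega)
          · exact g3
        rcases g1 with g1 | g1
        · -- (C,D) row-adjacent : pigeonhole F1 on X = (B.1, B.2+1)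
          exfalso
          have hX : (B.1, B.2 + 1) ∈ μ :=
            μ.up_left_mem (by omega) (by omega) (hD : (D.1, D.2) ∈ μ)
          have l1 := T.entry_lt_entry (x1 := B.1) (y1 := B.2) hX le_rfl (by omega)
            (by simp [Prod.ext_iff])
          have l2 := T.entry_lt_entry (x1 := B.1) (y1 := B.2 + 1)
            (hD : (D.1, D.2) ∈ μ) (by omega) (by omega) (by simp [Prod.ext_iff]; omega)
          have eX : T.entry B.1 (B.2 + 1) = j + 2 := by omega
          have := congrArg Prod.fst (T.cell_unique hX hC (by rw [eX, eC]))
          simp at this; omega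
        · exact ⟨T.descent_intro hB hC eB eC (by omega),
            T.descent_intro hC hD eC eD (by omega)⟩
      · -- I.x.ii : third swap active, final cells A, C, D
        have g3' : A.1 < B.1 ∧ B.2 < A.2 := by
          rcases g3 with g3 | g3
          · exact g3
          · exact absurd g3.1 (by omega)
        have wC : (T.bk j).entry C.1 C.2 = j + 2 := by
          rw [unch3 C.1 C.2 (by rw [eC]; omega) (by rw [eC]; omega), eC]
        have wD : (T.bk j).entry D.1 D.2 = j + 3 := by
          rw [unch3 D.1 D.2 (by rw [eD]; omega) (by rw [eD]; omega), eD]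
        rcases g1 with g1 | g1
        · -- (C,D) row-adjacent : pigeonhole F2 on X = (B.1, B.2+1)
          exfalso
          have hX : (B.1, B.2 + 1) ∈ μ :=
            μ.up_left_mem (by omega) (by omega) (hD : (D.1, D.2) ∈ μ)
          have l1 := T.entry_lt_entry (x1 := B.1) (y1 := B.2) hX le_rfl (by omega)
            (by simp [Prod.ext_iff])
          have l2 := T.entry_lt_entry (x1 := B.1) (y1 := B.2 + 1)
            (hD : (D.1, D.2) ∈ μ) (by omega) (by omega) (by simp [Prod.ext_iff]; omega)
          have eX : T.entry B.1 (B.2 + 1) = j + 2 := by omega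
          have := congrArg Prod.fst (T.cell_unique hX hC (by rw [eX, eC]))
          simp at this; omega
        · exact ⟨(T.bk j).descent_intro hA hC wA wC (by omega),
            (T.bk j).descent_intro hC hD wC wD (by omega)⟩
    · -- I.y : second swap active; V := T.bk (j+1), entries B ↦ j+2, C ↦ j+1
      have g2' : B.1 < C.1 ∧ C.2 < B.2 := by
        rcases g2 with g2 | g2
        · exact g2
        · exact absurd g2.1 (by omega)
      have vA : (T.bk (j + 1)).entry A.1 A.2 = j := by
        rw [unch2 A.1 A.2 (by rw [eA]; omega) (by rw [eA]; omega), eA]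
      have vD : (T.bk (j + 1)).entry D.1 D.2 = j + 3 := by
        rw [unch2 D.1 D.2 (by rw [eD]; omega) (by rw [eD]; omega), eD]
      rcases (T.bk (j + 1)).step (k := j) hA hC vA vC with ⟨hW, g3⟩ | ⟨wA, wC, unch3, g3⟩
      · -- both geometric options contradict A.1 < B.1 < C.1
        exfalso; rcases g3 with g3 | g3 <;> omega
      · have g3' : A.1 < C.1 ∧ C.2 < A.2 := by
          rcases g3 with g3 | g3
          · exact g3
          · exact absurd g3.1 (by omega)
        have wB : ((T.bk (j + 1)).bk j).entry B.1 B.2 = j + 2 := by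
          rw [unch3 B.1 B.2 (by rw [vB]; omega) (by rw [vB]; omega), vB]
        have wD : ((T.bk (j + 1)).bk j).entry D.1 D.2 = j + 3 := by
          rw [unch3 D.1 D.2 (by rw [vD]; omega) (by rw [vD]; omega), vD]
        refine ⟨((T.bk (j + 1)).bk j).descent_intro hA hB wA wB (by omega),
          ((T.bk (j + 1)).bk j).descent_intro hB hD wB wD ?_⟩
        rcases g1 with g1 | g1 <;> omega
  · -- Case II : first swap active; U := T.bk (j+2), entries C ↦ j+3, D ↦ j+2
    have g1' : (C.1 < D.1 ∧ D.2 < C.2) ∨ (D.1 < C.1 ∧ C.2 < D.2) := g1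
    have uA : (T.bk (j + 2)).entry A.1 A.2 = j := by
      rw [unch1 A.1 A.2 (by rw [eA]; omega) (by rw [eA]; omega), eA]
    have uB : (T.bk (j + 2)).entry B.1 B.2 = j + 1 := by
      rw [unch1 B.1 B.2 (by rw [eB]; omega) (by rw [eB]; omega), eB]
    rcases (T.bk (j + 2)).step (k := j + 1) hB hD uB uD with ⟨hV, g2⟩ | ⟨vB, vD, unch2, g2⟩
    · -- II.x : second swap inactive
      rw [hV]
      rcases (T.bk (j + 2)).step (k := j) hA hB uA uB with ⟨hW, g3⟩ | ⟨wA, wB, unch3, g3⟩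
      · -- II.x.i : third inactive; final cells B, D, C in U
        rw [hW]
        have g3' : B.1 = A.1 + 1 ∧ B.2 = A.2 := by
          rcases g3 with g3 | g3
          · exact absurd g3.1 (by omega)
          · exact g3
        rcases g2 with g2 | g2
        · -- (B,D) row-adjacent in U : pigeonhole F3 on X = (A.1, A.2+1)
          exfalso
          have hX : (A.1, A.2 + 1) ∈ μ :=
            μ.up_left_mem (by omega) (by omega) (hD : (D.1, D.2) ∈ μ)
          have l1 := T.entry_lt_entry (x1 := A.1) (y1 := A.2) hX le_rfl (by omega)
            (by simp [Prod.ext_iff])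
          have l2 := T.entry_lt_entry (x1 := A.1) (y1 := A.2 + 1)
            (hD : (D.1, D.2) ∈ μ) (by omega) (by omega) (by simp [Prod.ext_iff]; omega)
          have eX9 : T.entry A.1 (A.2 + 1) = j + 1 ∨ T.entry A.1 (A.2 + 1) = j + 2 := by
            omega
          rcases eX9 with eX | eX
          · have := congrArg Prod.fst (T.cell_unique hX hB (by rw [eX, eB]))
            simp at this; omega
          · have := congrArg Prod.fst (T.cell_unique hX hC (by rw [eX, eC]))
            simp at this; omega
        · -- (B,D) column-adjacent
          refine ⟨(T.bk (j + 2)).descent_intro hB hD uB uD (by omega),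
            (T.bk (j + 2)).descent_intro hD hC uD uC ?_⟩
          rcases g1' with g1' | g1' <;> omega
      · -- II.x.ii : third active; final cells A, D, C
        have g3' : A.1 < B.1 ∧ B.2 < A.2 := by
          rcases g3 with g3 | g3
          · exact g3
          · exact absurd g3.1 (by omega)
        have wD : ((T.bk (j + 2)).bk j).entry D.1 D.2 = j + 2 := by
          rw [unch3 D.1 D.2 (by rw [uD]; omega) (by rw [uD]; omega), uD]
        have wC : ((T.bk (j + 2)).bk j).entry C.1 C.2 = j + 3 := by
          rw [unch3 C.1 C.2 (by rw [uC]; omega) (by rw [uC]; omega), uC]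
        refine ⟨((T.bk (j + 2)).bk j).descent_intro hA hD wA wD ?_,
          ((T.bk (j + 2)).bk j).descent_intro hD hC wD wC ?_⟩
        · rcases g2 with g2 | g2 <;> omega
        · rcases g1' with g1' | g1' <;> rcases g2 with g2 | g2 <;> omega
    · -- II.y : second swap active; V entries B ↦ j+2, D ↦ j+1
      have g2' : (B.1 < D.1 ∧ D.2 < B.2) ∨ (D.1 < B.1 ∧ B.2 < D.2) := g2
      have vA : ((T.bk (j + 2)).bk (j + 1)).entry A.1 A.2 = j := by
        rw [unch2 A.1 A.2 (by rw [uA]; omega) (by rw [uA]; omega), uA]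
      have vC : ((T.bk (j + 2)).bk (j + 1)).entry C.1 C.2 = j + 3 := by
        rw [unch2 C.1 C.2 (by rw [uC]; omega) (by rw [uC]; omega), uC]
      rcases ((T.bk (j + 2)).bk (j + 1)).step (k := j) hA hD vA vD with
        ⟨hW, g3⟩ | ⟨wA, wD, unch3, g3⟩
      · -- II.y.i : third inactive; final cells D, B, C
        rw [hW]
        have g2'' : D.1 < B.1 ∧ B.2 < D.2 := by
          rcases g2' with g2' | g2' <;> rcases g3 with g3 | g3 <;>
            first
            | exact g2'
            | omega
        exact ⟨((T.bk (j + 2)).bk (j + 1)).descent_intro hD hB vD vB (by omega),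
          ((T.bk (j + 2)).bk (j + 1)).descent_intro hB hC vB vC (by omega)⟩
      · -- II.y.ii : third active; final cells A, B, C
        have wB : (((T.bk (j + 2)).bk (j + 1)).bk j).entry B.1 B.2 = j + 2 := by
          rw [unch3 B.1 B.2 (by rw [vB]; omega) (by rw [vB]; omega), vB]
        have wC : (((T.bk (j + 2)).bk (j + 1)).bk j).entry C.1 C.2 = j + 3 := by
          rw [unch3 C.1 C.2 (by rw [vC]; omega) (by rw [vC]; omega), vC]
        exact ⟨(((T.bk (j + 2)).bk (j + 1)).bk j).descent_intro hA hB wA wB (by omega),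
          (((T.bk (j + 2)).bk (j + 1)).bk j).descent_intro hB hC wB wC (by omega)⟩

end SYT

namespace SYT

variable {μ : YoungDiagram}

/-- Reverse direction: `bk (j+2) ∘ bk (j+1) ∘ bk j` maps tableaux with descents at
`j+1, j+2` to tableaux with descents at `j, j+1`. -/
lemma main_rev (T : SYT μ) (j : ℕ) (hj : 1 ≤ j) (hj3 : j + 3 ≤ μ.card)
    (h1 : T.DescentAt (j + 1)) (h2 : T.DescentAt (j + 2)) :
    (((T.bk j).bk (j + 1)).bk (j + 2)).DescentAt j ∧
    (((T.bk j).bk (j + 1)).bk (j + 2)).DescentAt (j + 1) := by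
  obtain ⟨A, hA, eA⟩ := T.exists_cell (v := j) (by omega) (by omega)
  obtain ⟨B, hB, eB⟩ := T.exists_cell (v := j + 1) (by omega) (by omega)
  obtain ⟨C, hC, eC⟩ := T.exists_cell (v := j + 2) (by omega) (by omega)
  obtain ⟨D, hD, eD⟩ := T.exists_cell (v := j + 3) (by omega) (by omega)
  have rBC : B.1 < C.1 := h1 B C hB hC eB eC
  have rCD : C.1 < D.1 := h2 C D hC hD eC eD
  rcases T.step (k := j) hA hB eA eB with ⟨hU, g1⟩ | ⟨uA, uB, unch1, g1⟩
  · -- first swap inactive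
    rw [hU]
    rcases T.step (k := j + 1) hB hC eB eC with ⟨hV, g2⟩ | ⟨vB, vC, unch2, g2⟩
    · rw [hV]
      have g2' : C.1 = B.1 + 1 ∧ C.2 = B.2 := by
        rcases g2 with g2 | g2
        · exact absurd g2.1 (by omega)
        · exact g2
      have R1 : ¬(B.1 = A.1 ∧ B.2 = A.2 + 1) := by
        -- pigeonhole on X = (C.1, A.2)
        rintro ⟨ha1, ha2⟩
        have hX : (C.1, A.2) ∈ μ :=
          μ.up_left_mem le_rfl (by omega) (hC : (C.1, C.2) ∈ μ)
        have l1 := T.entry_lt_entry (x1 := A.1) (y1 := A.2) hX (by omega) le_rfl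
          (by simp [Prod.ext_iff]; omega)
        have l2 := T.entry_lt_entry (x1 := C.1) (y1 := A.2)
          (hC : (C.1, C.2) ∈ μ) le_rfl (by omega) (by simp [Prod.ext_iff]; omega)
        have eX : T.entry C.1 A.2 = j + 1 := by omega
        have := congrArg Prod.fst (T.cell_unique hX hB (by rw [eX, eB]))
        simp at this; omega
      rcases T.step (k := j + 2) hC hD eC eD with ⟨hW, g3⟩ | ⟨wC, wD, unch3, g3⟩
      · -- all inactive; final cells A, B, C
        rw [hW]
        rcases g1 with g1 | g1
        · exact absurd g1 R1
        · exact ⟨T.descent_intro hA hB eA eB (by omega),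
            T.descent_intro hB hC eB eC (by omega)⟩
      · -- third active; final cells A, B, D
        have wA : (T.bk (j + 2)).entry A.1 A.2 = j := by
          rw [unch3 A.1 A.2 (by rw [eA]; omega) (by rw [eA]; omega), eA]
        have wB : (T.bk (j + 2)).entry B.1 B.2 = j + 1 := by
          rw [unch3 B.1 B.2 (by rw [eB]; omega) (by rw [eB]; omega), eB]
        rcases g1 with g1 | g1
        · exact absurd g1 R1
        · refine ⟨(T.bk (j + 2)).descent_intro hA hB wA wB (by omega),
            (T.bk (j + 2)).descent_intro hB hD wB wD ?_⟩
          rcases g3 with g3 | g3 <;> omega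
    · -- second swap active
      have g2' : B.1 < C.1 ∧ C.2 < B.2 := by
        rcases g2 with g2 | g2
        · exact g2
        · exact absurd g2.1 (by omega)
      have vA : (T.bk (j + 1)).entry A.1 A.2 = j := by
        rw [unch2 A.1 A.2 (by rw [eA]; omega) (by rw [eA]; omega), eA]
      have vD : (T.bk (j + 1)).entry D.1 D.2 = j + 3 := by
        rw [unch2 D.1 D.2 (by rw [eD]; omega) (by rw [eD]; omega), eD]
      rcases (T.bk (j + 1)).step (k := j + 2) hB hD vB vD with
        ⟨hW, g3⟩ | ⟨wB, wD, unch3, g3⟩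
      · exfalso; rcases g3 with g3 | g3 <;> omega
      · have g3' : B.1 < D.1 ∧ D.2 < B.2 := by
          rcases g3 with g3 | g3
          · exact g3
          · exact absurd g3.1 (by omega)
        have wA : ((T.bk (j + 1)).bk (j + 2)).entry A.1 A.2 = j := by
          rw [unch3 A.1 A.2 (by rw [vA]; omega) (by rw [vA]; omega), vA]
        have wC : ((T.bk (j + 1)).bk (j + 2)).entry C.1 C.2 = j + 1 := by
          rw [unch3 C.1 C.2 (by rw [vC]; omega) (by rw [vC]; omega), vC]
        refine ⟨((T.bk (j + 1)).bk (j + 2)).descent_intro hA hC wA wC ?_,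
          ((T.bk (j + 1)).bk (j + 2)).descent_intro hC hD wC wD (by omega)⟩
        rcases g1 with g1 | g1 <;> omega
  · -- first swap active: U := T.bk j, entries A ↦ j+1, B ↦ j
    have g1' : (A.1 < B.1 ∧ B.2 < A.2) ∨ (B.1 < A.1 ∧ A.2 < B.2) := g1
    have uC : (T.bk j).entry C.1 C.2 = j + 2 := by
      rw [unch1 C.1 C.2 (by rw [eC]; omega) (by rw [eC]; omega), eC]
    have uD : (T.bk j).entry D.1 D.2 = j + 3 := by
      rw [unch1 D.1 D.2 (by rw [eD]; omega) (by rw [eD]; omega), eD]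
    rcases (T.bk j).step (k := j + 1) hA hC uA uC with ⟨hV, g2⟩ | ⟨vA, vC, unch2, g2⟩
    · -- second inactive
      rw [hV]
      rcases (T.bk j).step (k := j + 2) hC hD uC uD with ⟨hW, g3⟩ | ⟨wC, wD, unch3, g3⟩
      · -- third inactive; final cells B, A, C
        rw [hW]
        have g3' : D.1 = C.1 + 1 ∧ D.2 = C.2 := by
          rcases g3 with g3 | g3
          · exact absurd g3.1 (by omega)
          · exact g3
        have g1'' : B.1 < A.1 ∧ A.2 < B.2 := by
          rcases g1' with g1' | g1' <;> rcases g2 with g2 | g2 <;>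
            first
            | exact g1'
            | omega
        rcases g2 with g2 | g2
        · -- (A,C) row-adjacent : pigeonhole R2 on Y = (A.1 + 1, A.2)
          exfalso
          have hY : (A.1 + 1, A.2) ∈ μ :=
            μ.up_left_mem (by omega) (by omega) (hD : (D.1, D.2) ∈ μ)
          have l1 := T.entry_lt_entry (x1 := A.1) (y1 := A.2) hY (by omega) le_rfl
            (by simp [Prod.ext_iff])
          have l2 := T.entry_lt_entry (x1 := A.1 + 1) (y1 := A.2)
            (hD : (D.1, D.2) ∈ μ) (by omega) (by omega) (by simp [Prod.ext_iff]; omega)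
          have eY9 : T.entry (A.1 + 1) A.2 = j + 1 ∨ T.entry (A.1 + 1) A.2 = j + 2 := by
            omega
          rcases eY9 with eY | eY
          · have := congrArg Prod.fst (T.cell_unique hY hB (by rw [eY, eB]))
            simp at this; omega
          · have := congrArg Prod.fst (T.cell_unique hY hC (by rw [eY, eC]))
            simp at this; omega
        · exact ⟨(T.bk j).descent_intro hB hA uB uA (by omega),
            (T.bk j).descent_intro hA hC uA uC (by omega)⟩
      · -- third active; final cells B, A, D
        have wB : ((T.bk j).bk (j + 2)).entry B.1 B.2 = j := by
          rw [unch3 B.1 B.2 (by rw [uB]; omega) (by rw [uB]; omega), uB]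
        have wA : ((T.bk j).bk (j + 2)).entry A.1 A.2 = j + 1 := by
          rw [unch3 A.1 A.2 (by rw [uA]; omega) (by rw [uA]; omega), uA]
        have g1'' : B.1 < A.1 ∧ A.2 < B.2 := by
          rcases g1' with g1' | g1' <;> rcases g2 with g2 | g2 <;>
            first
            | exact g1'
            | omega
        refine ⟨((T.bk j).bk (j + 2)).descent_intro hB hA wB wA (by omega),
          ((T.bk j).bk (j + 2)).descent_intro hA hD wA wD ?_⟩
        rcases g2 with g2 | g2 <;> omega
    · -- second active: V entries A ↦ j+2, C ↦ j+1
      have g2' : (A.1 < C.1 ∧ C.2 < A.2) ∨ (C.1 < A.1 ∧ A.2 < C.2) := g2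
      have vB : ((T.bk j).bk (j + 1)).entry B.1 B.2 = j := by
        rw [unch2 B.1 B.2 (by rw [uB]; omega) (by rw [uB]; omega), uB]
      have vD : ((T.bk j).bk (j + 1)).entry D.1 D.2 = j + 3 := by
        rw [unch2 D.1 D.2 (by rw [uD]; omega) (by rw [uD]; omega), uD]
      rcases ((T.bk j).bk (j + 1)).step (k := j + 2) hA hD vA vD with
        ⟨hW, g3⟩ | ⟨wA, wD, unch3, g3⟩
      · -- third inactive; final cells B, C, A
        rw [hW]
        have g2'' : C.1 < A.1 ∧ A.2 < C.2 := by
          rcases g2' with g2' | g2' <;> rcases g3 with g3 | g3 <;>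
            first
            | exact g2'
            | omega
        exact ⟨((T.bk j).bk (j + 1)).descent_intro hB hC vB vC (by omega),
          ((T.bk j).bk (j + 1)).descent_intro hC hA vC vA (by omega)⟩
      · -- third active; final cells B, C, D
        have wB : (((T.bk j).bk (j + 1)).bk (j + 2)).entry B.1 B.2 = j := by
          rw [unch3 B.1 B.2 (by rw [vB]; omega) (by rw [vB]; omega), vB]
        have wC : (((T.bk j).bk (j + 1)).bk (j + 2)).entry C.1 C.2 = j + 1 := by
          rw [unch3 C.1 C.2 (by rw [vC]; omega) (by rw [vC]; omega), vC]
        exact ⟨(((T.bk j).bk (j + 1)).bk (j + 2)).descent_intro hB hC wB wC (by omega),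
          (((T.bk j).bk (j + 1)).bk (j + 2)).descent_intro hC hD wC wD (by omega)⟩

end SYT

namespace SYT

variable {μ : YoungDiagram}

/-- The step equivalence between tableaux with descents at `{j, j+1}` and at
`{j+1, j+2}`. -/
noncomputable def stepEquiv (j : ℕ) (hj : 1 ≤ j) (hj3 : j + 3 ≤ μ.card) :
    {T : SYT μ // T.DescentAt j ∧ T.DescentAt (j + 1)} ≃
    {T : SYT μ // T.DescentAt (j + 1) ∧ T.DescentAt (j + 2)} where
  toFun T := ⟨((T.1.bk (j + 2)).bk (j + 1)).bk j,
    main_fwd T.1 j hj hj3 T.2.1 T.2.2⟩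
  invFun T := ⟨((T.1.bk j).bk (j + 1)).bk (j + 2),
    main_rev T.1 j hj hj3 T.2.1 T.2.2⟩
  left_inv T := by
    ext1
    simp only
    rw [bk_bk, bk_bk, bk_bk]
  right_inv T := by
    ext1
    simp only
    rw [bk_bk, bk_bk, bk_bk]

lemma card_step (j : ℕ) (hj : 1 ≤ j) (hj3 : j + 3 ≤ μ.card) :
    Nat.card {T : SYT μ // T.DescentAt j ∧ T.DescentAt (j + 1)} =
    Nat.card {T : SYT μ // T.DescentAt (j + 1) ∧ T.DescentAt (j + 2)} :=
  Nat.card_congr (stepEquiv j hj hj3)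

lemma card_eq_one (i : ℕ) (hi1 : 1 ≤ i) (hi2 : i + 2 ≤ μ.card) :
    Nat.card {T : SYT μ // T.DescentAt i ∧ T.DescentAt (i + 1)} =
    Nat.card {T : SYT μ // T.DescentAt 1 ∧ T.DescentAt 2} := by
  induction i with
  | zero => omega
  | succ m ih =>
    rcases Nat.eq_or_lt_of_le hi1 with h | h
    · simp [← h]
    · have hm1 : 1 ≤ m := by omega
      have hm3 : m + 3 ≤ μ.card := by omega
      rw [← card_step m hm1 hm3]
      exact ih hm1 (by omega)

end SYT

/-- The number of standard Young tableaux of shape `μ` with descents at both `i` and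
`i+1` (for `1 ≤ i < n − 1`) is independent of `i`. -/
theorem adjacent_descent_count_independent (n : ℕ) (μ : YoungDiagram) (hn : μ.card = n)
    (i i' : ℕ) (hi1 : 1 ≤ i) (hi2 : i < n - 1) (hi'1 : 1 ≤ i') (hi'2 : i' < n - 1) :
    Nat.card {T : SYT μ // T.DescentAt i ∧ T.DescentAt (i + 1)} =
      Nat.card {T : SYT μ // T.DescentAt i' ∧ T.DescentAt (i' + 1)} := by
  subst hn
  have hn3 : 3 ≤ μ.card := by omega
  rw [SYT.card_eq_one i hi1 (by omega), SYT.card_eq_one i' hi'1 (by omega)]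
end

section
/- Let λ be a partition of n ≥ 2 and q = λ₁/n. Then c_{λ'} ≥ min{1/4, (1−q)/2}, where c_{λ'} = (1/2)[1 + Σᵢ λ'ᵢ(λ'ᵢ−1)/(n(n−1)) − Σᵢ λᵢ(λᵢ−1)/(n(n−1))]. -/
open Finset

/-- `c_{λ'} = (1/2)[1 + Σᵢ λ'ᵢ(λ'ᵢ−1)/(n(n−1)) − Σᵢ λᵢ(λᵢ−1)/(n(n−1))]`, where
`λᵢ = μ.rowLen i`, `λ'ᵢ = μ.colLen i` and `n = μ.card`. -/
noncomputable def cB (μ : YoungDiagram) : ℝ :=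
  (1 / 2) *
    (1 + (∑ i ∈ Finset.range μ.card, (μ.colLen i : ℝ) * ((μ.colLen i : ℝ) - 1)) /
        (μ.card * ((μ.card : ℝ) - 1))
      - (∑ i ∈ Finset.range μ.card, (μ.rowLen i : ℝ) * ((μ.rowLen i : ℝ) - 1)) /
        (μ.card * ((μ.card : ℝ) - 1)))

/-! In fact `c_{λ'} ≥ (1−q)/2`. Dropping the nonnegative column term, it remains to see
`Σᵢ λᵢ(λᵢ−1) ≤ λ₁(n−1)`. This holds because `λᵢ(λᵢ−1) ≤ λᵢ(λ₁−1)` and `Σᵢ λᵢ = n`, so the sum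
is at most `(λ₁−1)n ≤ λ₁(n−1)`. -/

lemma Finset.sum_mul_sub_one_le_mul_sum {ι : Type*} (s : Finset ι) (x : ι → ℝ) {L : ℝ}
    (hx : ∀ i ∈ s, 0 ≤ x i) (hL : ∀ i ∈ s, x i ≤ L) :
    ∑ i ∈ s, x i * (x i - 1) ≤ (L - 1) * ∑ i ∈ s, x i := by
  rw [mul_sum]
  refine sum_le_sum fun i hi => ?_
  rw [mul_comm (L - 1)]
  exact mul_le_mul_of_nonneg_left (by linarith [hL i hi]) (hx i hi)

lemma Nat.cast_mul_cast_sub_one_nonneg (m : ℕ) : 0 ≤ (m : ℝ) * ((m : ℝ) - 1) := by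
  rcases m with _ | m
  · simp
  · rw [Nat.cast_succ, add_sub_cancel_right]
    positivity

namespace YoungDiagram

lemma rowLen_le_card (μ : YoungDiagram) (i : ℕ) : μ.rowLen i ≤ μ.card := by
  rw [rowLen_eq_card]
  exact card_le_card (filter_subset _ _)

lemma colLen_le_card (μ : YoungDiagram) (j : ℕ) : μ.colLen j ≤ μ.card := by
  rw [colLen_eq_card]
  exact card_le_card (filter_subset _ _)

lemma sum_rowLen_of_colLen_zero_le (μ : YoungDiagram) {k : ℕ} (hk : μ.colLen 0 ≤ k) :
    ∑ i ∈ range k, μ.rowLen i = μ.card := by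
  rw [YoungDiagram.card, card_eq_sum_card_fiberwise (f := Prod.fst) (t := range k)]
  · exact sum_congr rfl fun i _ => μ.rowLen_eq_card
  · intro c hc
    exact mem_range.mpr <|
      (mem_iff_lt_colLen.mp (μ.up_left_mem le_rfl (Nat.zero_le _) hc)).trans_le hk

lemma sum_rowLen_mul_rowLen_sub_one_le (μ : YoungDiagram) :
    ∑ i ∈ range μ.card, (μ.rowLen i : ℝ) * ((μ.rowLen i : ℝ) - 1)
      ≤ μ.rowLen 0 * ((μ.card : ℝ) - 1) := by
  have hsum : ∑ i ∈ range μ.card, (μ.rowLen i : ℝ) = μ.card :=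
    mod_cast μ.sum_rowLen_of_colLen_zero_le (μ.colLen_le_card 0)
  have hle := sum_mul_sub_one_le_mul_sum (range μ.card) (fun i => (μ.rowLen i : ℝ))
    (L := μ.rowLen 0) (fun i _ => Nat.cast_nonneg _)
    (fun i _ => by exact_mod_cast μ.rowLen_anti 0 i (Nat.zero_le i))
  have hL : (μ.rowLen 0 : ℝ) ≤ μ.card := by exact_mod_cast μ.rowLen_le_card 0
  rw [hsum] at hle
  linarith

end YoungDiagram

lemma one_sub_rowLen_zero_div_card_div_two_le_cB (μ : YoungDiagram) (h2 : 2 ≤ μ.card) :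
    (1 - μ.rowLen 0 / (μ.card : ℝ)) / 2 ≤ cB μ := by
  have hn : (2 : ℝ) ≤ μ.card := by exact_mod_cast h2
  have hD : 0 < (μ.card : ℝ) * ((μ.card : ℝ) - 1) := by nlinarith
  have hcol : 0 ≤ (∑ i ∈ range μ.card, (μ.colLen i : ℝ) * ((μ.colLen i : ℝ) - 1)) /
      (μ.card * ((μ.card : ℝ) - 1)) :=
    div_nonneg (sum_nonneg fun i _ => Nat.cast_mul_cast_sub_one_nonneg _) hD.le
  have hrow : (∑ i ∈ range μ.card, (μ.rowLen i : ℝ) * ((μ.rowLen i : ℝ) - 1)) /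
      (μ.card * ((μ.card : ℝ) - 1)) ≤ μ.rowLen 0 / (μ.card : ℝ) := by
    calc _ ≤ μ.rowLen 0 * ((μ.card : ℝ) - 1) / (μ.card * ((μ.card : ℝ) - 1)) :=
          div_le_div_of_nonneg_right μ.sum_rowLen_mul_rowLen_sub_one_le hD.le
      _ = μ.rowLen 0 / (μ.card : ℝ) :=
          mul_div_mul_right _ _ (by linarith)
  rw [cB]
  linarith

/-- `c_{λ'} ≥ min{1/4, (1−q)/2}` where `q = λ₁/n`. -/
theorem c_conj_min_lower_bound (μ : YoungDiagram) (n : ℕ) (hn : μ.card = n) (h2 : 2 ≤ n)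
    (q : ℝ) (hq : q = (μ.rowLen 0 : ℝ) / n) :
    min (1 / 4 : ℝ) ((1 - q) / 2) ≤ cB μ := by
  subst hn hq
  exact (min_le_right _ _).trans (one_sub_rowLen_zero_div_card_div_two_le_cB μ h2)
end
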